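/- In the AF F_T built from a tree T, the argument b_σ belongs to G⁺ (is attacked by the grounded extension) if and only if σ is ranked in T. -/

import Mathlib

def defenseFn {A : Type*} (att : A → A → Prop) (S : Set A) : Set A :=
  {x | ∀ y, att y x → ∃ z ∈ S, att z y}

/-- `Gr` is the grounded extension: the least fixed point of the defense function. -/
def IsGrounded {A : Type*} (att : A → A → Prop) (Gr : Set A) : Prop :=
  defenseFn att Gr = Gr ∧ ∀ S, defenseFn att S = S → Gr ⊆ S

/-- A tree: a prefix-closed set of finite sequences of naturals. -/
def IsTree (T : Set (List ℕ)) : Prop := ∀ σ ∈ T, ∀ τ : List ℕ, τ <+: σ → τ ∈ T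

/-- `RankLE T σ β` : `σ` is ranked in `T` with rank at most `β`
(every child of `σ` in `T` has rank strictly less than `β`). -/
inductive RankLE (T : Set (List ℕ)) : List ℕ → Ordinal → Prop
  | intro (σ : List ℕ) (β : Ordinal) (g : ℕ → Ordinal)
      (hlt : ∀ n : ℕ, σ ++ [n] ∈ T → g n < β)
      (h : ∀ n : ℕ, σ ++ [n] ∈ T → RankLE T (σ ++ [n]) (g n)) : RankLE T σ β

/-- The AF `F_T` built from a tree `T`: arguments are `(false, σ)` (the `a_σ`'s)
and `(true, σ)` (the `b_σ`'s) for `σ ∈ T`; `b_σ` attacks `a_{σ⁻}` and `a_σ` attacks `b_σ`. -/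
def ftAtt (T : Set (List ℕ)) : Bool × List ℕ → Bool × List ℕ → Prop := fun x y =>
  (x.2 ∈ T ∧ x.1 = true ∧ y.1 = false ∧ x.2 ≠ [] ∧ y.2 = x.2.dropLast) ∨
  (x.2 ∈ T ∧ x.1 = false ∧ y.1 = true ∧ y.2 = x.2)

/-- `π` is an infinite path through the tree `T`. -/
def IsPath (T : Set (List ℕ)) (π : ℕ → ℕ) : Prop :=
  ∀ n : ℕ, (List.ofFn fun i : Fin n => π i) ∈ T

/-!
The only attacker of `b_σ` is `a_σ`, and the attackers of `a_σ` are the `b_τ` for the children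
`τ` of `σ`, each attacked in turn only by `a_τ`. Hence `a_σ` is defended by a set containing the
`a_τ` of all children, and the leastness of the grounded extension makes `{σ | a_σ ∈ G}` exactly
the accessible part of the child relation. By dependent choice a node is accessible iff no
infinite descending chain of children starts at it, i.e. iff no infinite path extends it.
-/

def IsChild (T : Set (List ℕ)) (τ σ : List ℕ) : Prop := τ ∈ T ∧ ∃ n, τ = σ ++ [n]

lemma defenseFn_mono {A : Type*} (att : A → A → Prop) : Monotone (defenseFn att) :=
  fun _ _ hST _ hx y hy => (hx y hy).imp fun _ ⟨hzS, hz⟩ => ⟨hST hzS, hz⟩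

lemma IsGrounded.subset_of_defenseFn_subset {A : Type*} {att : A → A → Prop} {Gr S : Set A}
    (hGr : IsGrounded att Gr) (hS : defenseFn att S ⊆ S) : Gr ⊆ S :=
  let F : Set A →o Set A := ⟨defenseFn att, defenseFn_mono att⟩
  (hGr.2 F.lfp F.map_lfp).trans (F.lfp_le hS)

section Attacks

variable {T : Set (List ℕ)} {x : Bool × List ℕ} {σ : List ℕ}

lemma ftAtt_true_iff : ftAtt T x (true, σ) ↔ σ ∈ T ∧ x = (false, σ) := by
  obtain ⟨b, τ⟩ := x
  cases b <;> simp only [ftAtt] <;> grind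

lemma ftAtt_false_iff : ftAtt T x (false, σ) ↔ ∃ n, σ ++ [n] ∈ T ∧ x = (true, σ ++ [n]) := by
  obtain ⟨b, τ⟩ := x
  constructor
  · rintro (⟨hτ, rfl, -, hne, rfl⟩ | ⟨-, -, h, -⟩)
    · exact ⟨τ.getLast hne, by rwa [List.dropLast_append_getLast hne], by
        rw [List.dropLast_append_getLast hne]⟩
    · cases h
  · rintro ⟨n, hn, h⟩
    cases h
    exact Or.inl ⟨hn, rfl, rfl, by simp, List.dropLast_concat.symm⟩

end Attacks

section Grounded

variable {T : Set (List ℕ)} {Gr : Set (Bool × List ℕ)}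

lemma IsGrounded.false_mem_of_acc (hGr : IsGrounded (ftAtt T) Gr) {σ : List ℕ}
    (hσ : Acc (IsChild T) σ) : (false, σ) ∈ Gr := by
  induction hσ with
  | intro σ _ ih =>
    rw [← hGr.1]
    intro y hy
    obtain ⟨n, hn, rfl⟩ := ftAtt_false_iff.mp hy
    exact ⟨_, ih _ ⟨hn, n, rfl⟩, ftAtt_true_iff.mpr ⟨hn, rfl⟩⟩

lemma IsGrounded.acc_of_false_mem (hGr : IsGrounded (ftAtt T) Gr) {σ : List ℕ}
    (hσ : (false, σ) ∈ Gr) : Acc (IsChild T) σ := by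
  suffices Gr ⊆ {x | x.1 = false → Acc (IsChild T) x.2} from this hσ rfl
  refine hGr.subset_of_defenseFn_subset ?_
  rintro ⟨b, τ⟩ hτ rfl
  refine Acc.intro τ ?_
  rintro _ ⟨hn, n, rfl⟩
  obtain ⟨z, hz, hzatt⟩ := hτ _ (ftAtt_false_iff.mpr ⟨n, hn, rfl⟩)
  obtain ⟨-, rfl⟩ := ftAtt_true_iff.mp hzatt
  exact hz rfl

end Grounded

lemma List.exists_ofFn_eq_take {α : Type*} {f : ℕ → List α} (hf : ∀ k, f k <+: f (k + 1))
    (hlen : ∀ k, k < (f (k + 1)).length) :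
    ∃ π : ℕ → α, ∀ n, List.ofFn (fun i : Fin n => π i) = (f n).take n := by
  refine ⟨fun i => (f (i + 1))[i]'(hlen i), fun n => List.ext_getElem ?_ fun i hi _ => ?_⟩
  · cases n <;> simp [hlen]
  · simp only [List.length_ofFn] at hi
    simp only [List.getElem_ofFn, List.getElem_take]
    exact (Nat.rel_of_forall_rel_succ_of_le _ hf hi).getElem _

lemma exists_path_iff_exists_child_chain {T : Set (List ℕ)} (hT : IsTree T) {σ : List ℕ} :
    (∃ π : ℕ → ℕ, IsPath T π ∧ σ = List.ofFn (fun i : Fin σ.length => π i)) ↔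
      ∃ f : ℕ → List ℕ, f 0 = σ ∧ ∀ k, IsChild T (f (k + 1)) (f k) := by
  constructor
  · rintro ⟨π, hπ, hσπ⟩
    exact ⟨fun k => List.ofFn (fun i : Fin (σ.length + k) => π i), hσπ.symm,
      fun k => ⟨hπ _, π (σ.length + k), List.ofFn_succ_last⟩⟩
  · rintro ⟨f, rfl, hf⟩
    choose hmem c hc using hf
    have hpre : ∀ k, f k <+: f (k + 1) := fun k => ⟨_, (hc k).symm⟩
    have hlen : ∀ k, (f k).length = (f 0).length + k := by
      intro k
      induction k with
      | zero => rfl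
      | succ k ih => rw [hc, List.length_append, ih, List.length_singleton, Nat.add_assoc]
    obtain ⟨π, hπ⟩ := List.exists_ofFn_eq_take hpre (fun k => by rw [hlen]; omega)
    refine ⟨π, fun n => ?_, ?_⟩
    · rw [hπ]
      exact hT _ (hmem n) _ ((List.take_prefix _ _).trans (hpre n))
    · rw [hπ, ← List.prefix_iff_eq_take]
      exact Nat.rel_of_forall_rel_succ_of_le _ hpre (Nat.zero_le _)

lemma acc_isChild_iff_not_exists_path {T : Set (List ℕ)} (hT : IsTree T) {σ : List ℕ} :
    Acc (IsChild T) σ ↔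
      ¬ ∃ π : ℕ → ℕ, IsPath T π ∧ σ = List.ofFn (fun i : Fin σ.length => π i) := by
  rw [exists_path_iff_exists_child_chain hT, ← not_acc_iff_exists_descending_chain, not_not]

/-- In `F_T`, the argument `b_σ` is attacked by the grounded extension iff `σ`
is ranked in `T`, i.e., no infinite path of `T` extends `σ`. -/
theorem ft_b_in_Gplus_iff_ranked (T : Set (List ℕ)) (hT : IsTree T)
    (Gr : Set (Bool × List ℕ)) (hGr : IsGrounded (ftAtt T) Gr)
    (σ : List ℕ) (hσ : σ ∈ T) :
    (∃ g ∈ Gr, ftAtt T g (true, σ)) ↔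
      ¬ ∃ π : ℕ → ℕ, IsPath T π ∧ σ = List.ofFn (fun i : Fin σ.length => π i) := by
  have hattacked : (∃ g ∈ Gr, ftAtt T g (true, σ)) ↔ (false, σ) ∈ Gr := by
    simp [ftAtt_true_iff, hσ]
  rw [hattacked, ← acc_isChild_iff_not_exists_path hT]
  exact ⟨hGr.acc_of_false_mem, hGr.false_mem_of_acc⟩
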